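/- arXiv:2205.12498 — 6 statements merged into one kernel-verified Lean document; each statement's English description precedes it below -/
import Mathlib

section
/- If the isoperimetric constant of a finite graph G satisfies i(G) > r − 1 for some positive integer r, then G is at least r-robust. -/
/-- A set `S` is `r`-reachable in `G` if some vertex in `S` has at least `r` neighbors outside `S`. -/
def rReachable {V : Type*} (G : SimpleGraph V) (r : ℕ) (S : Set V) : Prop :=
  ∃ i ∈ S, r ≤ ({j | G.Adj i j} \ S).ncard

/-- A graph is `r`-robust if for every pair of nonempty disjoint vertex subsets,
at least one of them is `r`-reachable. -/
def rRobust {V : Type*} (G : SimpleGraph V) (r : ℕ) : Prop :=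
  ∀ X₁ X₂ : Set V, X₁.Nonempty → X₂.Nonempty → Disjoint X₁ X₂ →
    rReachable G r X₁ ∨ rReachable G r X₂

/-- The number of boundary edges of a vertex set `S`: ordered pairs (i,j) with i ∈ S,
j ∉ S, and i adjacent to j. -/
noncomputable def edgeBoundaryCount {V : Type*} (G : SimpleGraph V) (S : Set V) : ℕ :=
  {p : V × V | G.Adj p.1 p.2 ∧ p.1 ∈ S ∧ p.2 ∉ S}.ncard

/-- The isoperimetric constant of a finite graph. -/
noncomputable def isoConst (V : Type*) [Fintype V] (G : SimpleGraph V) : ℝ :=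
  sInf {x : ℝ | ∃ S : Set V, S.Nonempty ∧ 2 * S.ncard ≤ Fintype.card V ∧
    x = (edgeBoundaryCount G S : ℝ) / (S.ncard : ℝ)}

/-!
A vertex set `S` with `2 * |S| ≤ n` none of whose vertices has `r` neighbours outside `S` has at
most `(r - 1) * |S|` boundary edges, so `i(G) ≤ |∂S| / |S| ≤ r - 1`. Of two disjoint nonempty
sets, at least one has at most `n / 2` vertices, and it is therefore `r`-reachable.
-/

open Finset in
theorem edgeBoundaryCount_le_mul {V : Type*} [Finite V] (G : SimpleGraph V) (S : Set V) (k : ℕ)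
    (hk : ∀ i ∈ S, ({j | G.Adj i j} \ S).ncard ≤ k) : edgeBoundaryCount G S ≤ k * S.ncard := by
  classical
  have := Fintype.ofFinite V
  set B := {p : V × V | G.Adj p.1 p.2 ∧ p.1 ∈ S ∧ p.2 ∉ S}
  rw [edgeBoundaryCount, Set.ncard_eq_toFinset_card' B, Set.ncard_eq_toFinset_card' S]
  refine card_le_mul_card_image_of_maps_to (f := Prod.fst)
    (fun p hp => Set.mem_toFinset.mpr (Set.mem_toFinset.mp hp).2.1) k fun i hi => ?_
  rw [Set.mem_toFinset] at hi
  have hfiber : (({p ∈ B.toFinset | p.1 = i} : Finset (V × V)) : Set (V × V)) =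
      Prod.mk i '' ({j | G.Adj i j} \ S) := by
    ext ⟨i', j⟩
    simp only [coe_filter, Set.mem_toFinset, B, Set.mem_ofPred_eq, Set.mem_image, Set.mem_sdiff,
      Prod.mk.injEq]
    grind
  rw [← Set.ncard_coe_finset, hfiber, Set.ncard_image_of_injective _ (Prod.mk_right_injective i)]
  exact hk i hi

theorem isoConst_le_div {V : Type*} [Fintype V] (G : SimpleGraph V) {S : Set V} (hS : S.Nonempty)
    (hcard : 2 * S.ncard ≤ Fintype.card V) :
    isoConst V G ≤ (edgeBoundaryCount G S : ℝ) / S.ncard :=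
  csInf_le ⟨0, by rintro x ⟨T, -, -, rfl⟩; positivity⟩ ⟨S, hS, hcard, rfl⟩

theorem rReachable_of_lt_isoConst {V : Type*} [Fintype V] (G : SimpleGraph V) {r : ℕ}
    (h : (r : ℝ) - 1 < isoConst V G) {S : Set V} (hS : S.Nonempty)
    (hcard : 2 * S.ncard ≤ Fintype.card V) : rReachable G r S := by
  by_contra hS_unreachable
  simp only [rReachable, not_exists, not_and, not_le] at hS_unreachable
  obtain ⟨i, hi⟩ := hS
  have hr : 0 < r := Nat.zero_lt_of_lt (hS_unreachable i hi)
  have hbound := edgeBoundaryCount_le_mul G S (r - 1) fun j hj =>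
    Nat.le_sub_one_of_lt (hS_unreachable j hj)
  have hS_pos : (0 : ℝ) < S.ncard := by exact_mod_cast (Set.ncard_pos S.toFinite).mpr ⟨i, hi⟩
  have hratio : (edgeBoundaryCount G S : ℝ) / S.ncard ≤ r - 1 := by
    rw [div_le_iff₀ hS_pos, ← Nat.cast_pred hr]
    exact_mod_cast hbound
  linarith [isoConst_le_div G ⟨i, hi⟩ hcard]

theorem two_mul_ncard_le_card_or_of_disjoint {V : Type*} [Fintype V] {X₁ X₂ : Set V}
    (h : Disjoint X₁ X₂) : 2 * X₁.ncard ≤ Fintype.card V ∨ 2 * X₂.ncard ≤ Fintype.card V := by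
  have hunion := Set.ncard_union_eq h
  have hle := Set.ncard_le_card (X₁ ∪ X₂)
  rw [Nat.card_eq_fintype_card] at hle
  omega

theorem isoConst_gt_imp_robust_general {V : Type*} [Fintype V] (G : SimpleGraph V) (r : ℕ)
    (h : (r : ℝ) - 1 < isoConst V G) : rRobust G r := by
  intro X₁ X₂ h₁ h₂ hdisj
  rcases two_mul_ncard_le_card_or_of_disjoint hdisj with hcard | hcard
  · exact Or.inl (rReachable_of_lt_isoConst G h h₁ hcard)
  · exact Or.inr (rReachable_of_lt_isoConst G h h₂ hcard)

/-- If the isoperimetric constant of a finite graph exceeds r - 1 for a positive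
integer r, then the graph is at least r-robust. -/
theorem isoConst_gt_imp_robust {V : Type*} [Fintype V] (G : SimpleGraph V) (r : ℕ)
    (hr : 0 < r) (h : (r : ℝ) - 1 < isoConst V G) : rRobust G r :=
  isoConst_gt_imp_robust_general G r h
end

section
/- For a connected finite undirected graph G that is not complete, the algebraic connectivity (second smallest eigenvalue of the Laplacian) is at most the vertex connectivity: λ₂(L) ≤ κ(G). -/
/-!
Fiedler's argument. For connected `G` the eigenvector of the smallest Laplacian eigenvalue `0`
is constant, so every `x` with `∑ v, x v = 0` satisfies `λ₂ ‖x‖² ≤ xᵀ L x`. If deleting `S`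
leaves two nonempty parts `A`, `B` with no edge between them, take `x = |B| 𝟙_A - |A| 𝟙_B`: it is
constant along every edge avoiding `S`, so only edges at `S` contribute to `xᵀ L x`, and charging
each such edge to its endpoint in `S` gives `xᵀ L x ≤ |S| ‖x‖²`. A minimum vertex cut thus gives
`λ₂ ≤ κ`; when the minimum is attained by leaving at most one vertex, a non-adjacent pair
`A = {u}`, `B = {w}` gives `λ₂ ≤ n - 2 ≤ κ` instead.
-/

/-- The vertex connectivity of `G`: the least size of a vertex set whose removal
disconnects the graph or leaves fewer than 2 vertices. -/
noncomputable def vConn {V : Type*} (G : SimpleGraph V) : ℕ :=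
  sInf {k | ∃ S : Set V, S.ncard = k ∧ (¬ (G.induce Sᶜ).Connected ∨ Sᶜ.ncard ≤ 1)}

/-- The second smallest eigenvalue (with multiplicity) of the Laplacian matrix of `G`:
the algebraic connectivity. -/
noncomputable def lambda2 {V : Type*} [Fintype V] [DecidableEq V] (G : SimpleGraph V)
    [DecidableRel G.Adj] : ℝ :=
  if h : 1 < Fintype.card V then
    let f : Fin (Fintype.card V) → ℝ := fun i =>
      (SimpleGraph.posSemidef_lapMatrix ℝ G).1.eigenvalues ((Fintype.equivFin V).symm i)
    (f ∘ Tuple.sort f) ⟨1, h⟩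
  else 0

open Finset Matrix

namespace Matrix.IsHermitian

variable {n : Type*} [Fintype n] [DecidableEq n] {A : Matrix n n ℝ} (hA : A.IsHermitian)

theorem dotProduct_eq_sum_mul (x y : n → ℝ) :
    x ⬝ᵥ y = ∑ i, ((hA.eigenvectorBasis i).ofLp ⬝ᵥ x) * ((hA.eigenvectorBasis i).ofLp ⬝ᵥ y) := by
  have hinner (u v : n → ℝ) : inner ℝ (WithLp.toLp 2 u) (WithLp.toLp 2 v) = u ⬝ᵥ v := by
    simp [EuclideanSpace.inner_toLp_toLp, dotProduct_comm]
  rw [← hinner, ← (hA.eigenvectorBasis).sum_inner_mul_inner]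
  refine Finset.sum_congr rfl fun i _ => ?_
  rw [← (hA.eigenvectorBasis i).toLp_ofLp, hinner, hinner, dotProduct_comm x]

theorem dotProduct_mulVec_eq_sum_eigenvalues (x : n → ℝ) :
    x ⬝ᵥ (A *ᵥ x) = ∑ i, hA.eigenvalues i * ((hA.eigenvectorBasis i).ofLp ⬝ᵥ x) ^ 2 := by
  have hsymm : Aᵀ = A := by simpa [conjTranspose_eq_transpose_of_trivial] using hA.eq
  rw [hA.dotProduct_eq_sum_mul]
  refine Finset.sum_congr rfl fun i _ => ?_
  rw [dotProduct_mulVec, ← mulVec_transpose, hsymm, hA.mulVec_eigenvectorBasis, smul_dotProduct,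
    smul_eq_mul]
  ring

theorem mul_dotProduct_self_le_dotProduct_mulVec {μ : ℝ} {i₀ : n}
    (hμ : ∀ i ≠ i₀, μ ≤ hA.eigenvalues i) {x : n → ℝ}
    (hx : (hA.eigenvectorBasis i₀).ofLp ⬝ᵥ x = 0) :
    μ * (x ⬝ᵥ x) ≤ x ⬝ᵥ (A *ᵥ x) := by
  rw [hA.dotProduct_mulVec_eq_sum_eigenvalues, hA.dotProduct_eq_sum_mul, Finset.mul_sum]
  refine Finset.sum_le_sum fun i _ => ?_
  rcases eq_or_ne i i₀ with rfl | hi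
  · simp [hx]
  · rw [← sq]
    exact mul_le_mul_of_nonneg_right (hμ i hi) (sq_nonneg _)

end Matrix.IsHermitian

theorem Tuple.exists_forall_le_and_sort_one_le {m : ℕ} {α : Type*} [LinearOrder α]
    (f : Fin m → α) (hm : 1 < m) :
    ∃ i₀, (∀ i, f i₀ ≤ f i) ∧ ∀ i ≠ i₀, f (Tuple.sort f ⟨1, hm⟩) ≤ f i := by
  refine ⟨Tuple.sort f ⟨0, by omega⟩, fun i => ?_, fun i hi => ?_⟩
  · have h0 : (⟨0, by omega⟩ : Fin m) ≤ (Tuple.sort f).symm i := Fin.le_def.mpr (Nat.zero_le _)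
    simpa using Tuple.monotone_sort f h0
  · have hi0 : ((Tuple.sort f).symm i : ℕ) ≠ 0 := fun h => hi (by
      rw [← Fin.ext (a := (Tuple.sort f).symm i) (b := ⟨0, by omega⟩) h, Equiv.apply_symm_apply])
    have h1 : (⟨1, hm⟩ : Fin m) ≤ (Tuple.sort f).symm i :=
      Fin.le_def.mpr (Nat.one_le_iff_ne_zero.mpr hi0)
    simpa using Tuple.monotone_sort f h1

namespace SimpleGraph

theorem exists_ncard_eq_vConn {V : Type*} (G : SimpleGraph V) :
    ∃ S : Set V, S.ncard = vConn G ∧ (¬ (G.induce Sᶜ).Connected ∨ Sᶜ.ncard ≤ 1) :=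
  Nat.sInf_mem (s := {k | ∃ S : Set V, S.ncard = k ∧ (¬ (G.induce Sᶜ).Connected ∨ Sᶜ.ncard ≤ 1)})
    ⟨_, Set.univ, rfl, Or.inr (by simp)⟩

variable {V : Type*} [Fintype V] [DecidableEq V] (G : SimpleGraph V)

theorem exists_separation_of_not_preconnected_induce {S : Set V}
    (h : ¬ (G.induce Sᶜ).Preconnected) :
    ∃ A B : Finset V, A.Nonempty ∧ B.Nonempty ∧ Disjoint A B ∧
      (∀ i ∈ A, ∀ j ∈ B, ¬ G.Adj i j) ∧ (↑(A ∪ B)ᶜ : Set V) = S := by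
  classical
  obtain ⟨u, w, huw⟩ : ∃ u w, ¬ (G.induce Sᶜ).Reachable u w := by
    simpa [Preconnected] using h
  let inA (v : V) : Prop := ∃ hv : v ∉ S, (G.induce Sᶜ).Reachable u ⟨v, hv⟩
  refine ⟨univ.filter inA, univ.filter (fun v => v ∉ S ∧ ¬ inA v), ⟨u, ?_⟩, ⟨w, ?_⟩, ?_, ?_, ?_⟩
  · exact mem_filter.mpr ⟨mem_univ _, u.2, Reachable.refl u⟩
  · exact mem_filter.mpr ⟨mem_univ _, w.2, fun ⟨_, huw'⟩ => huw huw'⟩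
  · simp only [Finset.disjoint_left, mem_filter, mem_univ, true_and]
    tauto
  · simp only [mem_filter, mem_univ, true_and]
    rintro i ⟨hiS, hui⟩ j ⟨hjS, hj⟩ hij
    exact hj ⟨hjS, hui.trans (Adj.reachable (by simpa using hij))⟩
  · ext v
    by_cases hv : v ∈ S <;> simp [inA, hv]

variable [DecidableRel G.Adj]

theorem exists_eigenvalues_lapMatrix_eq_zero [Nonempty V] :
    ∃ i, (G.isHermitian_lapMatrix ℝ).eigenvalues i = 0 := by
  have h := (G.isHermitian_lapMatrix ℝ).det_eq_prod_eigenvalues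
  rw [det_lapMatrix_eq_zero, eq_comm, Finset.prod_eq_zero_iff] at h
  obtain ⟨i, -, hi⟩ := h
  exact ⟨i, by exact_mod_cast hi⟩

theorem dotProduct_eq_zero_of_lapMatrix_mulVec_eq_zero (hconn : G.Connected) {y x : V → ℝ}
    (hy : G.lapMatrix ℝ *ᵥ y = 0) (hx : ∑ v, x v = 0) : y ⬝ᵥ x = 0 := by
  obtain ⟨v₀⟩ := hconn.nonempty
  have hconst : ∀ v, y v = y v₀ := fun v =>
    (G.lapMatrix_mulVec_eq_zero_iff_forall_reachable.mp hy) v v₀ (hconn.preconnected v v₀)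
  simp only [dotProduct, hconst, ← Finset.mul_sum, hx, mul_zero]

theorem lambda2_mul_dotProduct_self_le (hconn : G.Connected) {x : V → ℝ} (hx : ∑ v, x v = 0) :
    lambda2 G * (x ⬝ᵥ x) ≤ x ⬝ᵥ (G.lapMatrix ℝ *ᵥ x) := by
  set hL := G.isHermitian_lapMatrix ℝ
  by_cases h : 1 < Fintype.card V
  swap
  · rw [lambda2, dif_neg h, zero_mul]
    simpa using (G.posSemidef_lapMatrix ℝ).dotProduct_mulVec_nonneg x
  have : Nonempty V := hconn.nonempty
  set e := Fintype.equivFin V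
  obtain ⟨j₀, hmin, hle⟩ :=
    Tuple.exists_forall_le_and_sort_one_le (hL.eigenvalues ∘ e.symm) h
  have hzero : hL.eigenvalues (e.symm j₀) = 0 := by
    obtain ⟨i, hi⟩ := G.exists_eigenvalues_lapMatrix_eq_zero
    refine le_antisymm ?_ ((G.posSemidef_lapMatrix ℝ).eigenvalues_nonneg _)
    simpa [hi] using hmin (e i)
  have hker : G.lapMatrix ℝ *ᵥ (hL.eigenvectorBasis (e.symm j₀)).ofLp = 0 := by
    rw [hL.mulVec_eigenvectorBasis, hzero, zero_smul]
  refine hL.mul_dotProduct_self_le_dotProduct_mulVec (fun i hi => ?_)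
    (G.dotProduct_eq_zero_of_lapMatrix_mulVec_eq_zero hconn hker hx)
  rw [lambda2, dif_pos h]
  exact (hle (e i) (by simpa [Equiv.eq_symm_apply] using hi)).trans_eq (by simp)

theorem dotProduct_lapMatrix_mulVec_le (S : Finset V) {x : V → ℝ} (hS : ∀ v ∈ S, x v = 0)
    (hx : ∀ i j, G.Adj i j → i ∉ S → j ∉ S → x i = x j) :
    x ⬝ᵥ (G.lapMatrix ℝ *ᵥ x) ≤ #S * (x ⬝ᵥ x) := by
  have hedge (i j : V) : (if G.Adj i j then (x i - x j) ^ 2 else 0) ≤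
      (if j ∈ S then x i ^ 2 else 0) + (if i ∈ S then x j ^ 2 else 0) := by
    by_cases hadj : G.Adj i j
    · by_cases hi : i ∈ S <;> by_cases hj : j ∈ S <;> simp [hadj, hi, hj, hS, hx i j]
    · simp only [hadj, if_false]; positivity
  have hsum : ∑ i, ∑ j, (if j ∈ S then x i ^ 2 else 0) = #S * (x ⬝ᵥ x) := by
    simp [Finset.sum_ite_mem, dotProduct, Finset.mul_sum, sq]
  rw [← toLinearMap₂'_apply', lapMatrix_toLinearMap₂']
  calc (∑ i, ∑ j, if G.Adj i j then (x i - x j) ^ 2 else 0) / 2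
      ≤ (∑ i, ∑ j, ((if j ∈ S then x i ^ 2 else 0) + (if i ∈ S then x j ^ 2 else 0))) / 2 := by
        gcongr with i _ j _; exact hedge i j
    _ = #S * (x ⬝ᵥ x) := by
        simp only [Finset.sum_add_distrib]
        rw [Finset.sum_comm (f := fun i j => if i ∈ S then x j ^ 2 else 0), hsum]
        ring

theorem lambda2_le_card_compl_union (hconn : G.Connected) {A B : Finset V} (hA : A.Nonempty)
    (hB : B.Nonempty) (hAB : Disjoint A B) (hnadj : ∀ i ∈ A, ∀ j ∈ B, ¬ G.Adj i j) :
    lambda2 G ≤ #(A ∪ B)ᶜ := by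
  set x : V → ℝ := fun v => (if v ∈ A then (#B : ℝ) else 0) - (if v ∈ B then (#A : ℝ) else 0)
  have hAx : ∀ v ∈ A, x v = #B := fun v hv => by simp [x, hv, Finset.disjoint_left.mp hAB hv]
  have hBx : ∀ v ∈ B, x v = -#A := fun v hv => by simp [x, hv, Finset.disjoint_right.mp hAB hv]
  have hsum : ∑ v, x v = 0 := by simp [x, Finset.sum_sub_distrib, mul_comm]
  have hpos : 0 < x ⬝ᵥ x := by
    obtain ⟨a, ha⟩ := hA
    obtain ⟨b, hb⟩ := hB
    have hx0 : x ≠ 0 := fun h => by simpa [hAx a ha, Finset.ne_empty_of_mem hb] using congrFun h a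
    simpa using (dotProduct_self_star_pos_iff (v := x)).mpr hx0
  have hvanish : ∀ v ∈ (A ∪ B)ᶜ, x v = 0 := fun v hv => by
    simp only [mem_compl, mem_union, not_or] at hv
    simp [x, hv]
  have hconst : ∀ i j, G.Adj i j → i ∉ (A ∪ B)ᶜ → j ∉ (A ∪ B)ᶜ → x i = x j := by
    intro i j hij hi hj
    simp only [mem_compl, not_not, mem_union] at hi hj
    rcases hi with hi | hi <;> rcases hj with hj | hj
    · rw [hAx i hi, hAx j hj]
    · exact absurd hij (hnadj i hi j hj)
    · exact absurd hij.symm (hnadj j hj i hi)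
    · rw [hBx i hi, hBx j hj]
  refine le_of_mul_le_mul_right ?_ hpos
  exact (G.lambda2_mul_dotProduct_self_le hconn hsum).trans
    (G.dotProduct_lapMatrix_mulVec_le _ hvanish hconst)

theorem lambda2_le_card_sub_two (hconn : G.Connected) (hG : G ≠ ⊤) :
    lambda2 G ≤ Fintype.card V - 2 := by
  obtain ⟨u, w, huw, hnadj⟩ : ∃ u w, u ≠ w ∧ ¬ G.Adj u w := by
    by_contra! h
    exact hG (by ext u w; exact ⟨fun huw => huw.ne, h u w⟩)
  have huw' : Disjoint ({u} : Finset V) {w} := disjoint_singleton.mpr huw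
  have hcard : #({u} ∪ {w} : Finset V) = 2 := by rw [card_union_of_disjoint huw']; rfl
  calc lambda2 G ≤ #({u} ∪ {w} : Finset V)ᶜ :=
        G.lambda2_le_card_compl_union hconn (singleton_nonempty u) (singleton_nonempty w) huw'
          (by simpa using hnadj)
    _ = Fintype.card V - 2 := by
        rw [card_compl, Nat.cast_sub (hcard ▸ card_le_univ _), hcard, Nat.cast_two]

end SimpleGraph

/-- For a connected finite graph that is not complete, the algebraic connectivity is at
most the vertex connectivity. -/
theorem lambda2_le_vertexConnectivity {V : Type*} [Fintype V] [DecidableEq V]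
    (G : SimpleGraph V) [DecidableRel G.Adj] (hconn : G.Connected) (hnc : G ≠ ⊤) :
    lambda2 G ≤ (vConn G : ℝ) := by
  obtain ⟨S, hS, hsep⟩ := G.exists_ncard_eq_vConn
  rw [← hS]
  rcases le_or_gt Sᶜ.ncard 1 with hsmall | hlarge
  · have hcompl : S.ncard + Sᶜ.ncard = Fintype.card V := by
      rw [Set.ncard_add_ncard_compl, Nat.card_eq_fintype_card]
    have hcard : (Fintype.card V : ℝ) ≤ S.ncard + 1 := by exact_mod_cast (by omega)
    linarith [G.lambda2_le_card_sub_two hconn hnc]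
  · have hne : Nonempty (Sᶜ : Set V) := (Set.nonempty_of_ncard_ne_zero (by omega)).to_subtype
    have hnpre : ¬ (G.induce Sᶜ).Preconnected := fun hpre =>
      hsep.resolve_right hlarge.not_ge ((SimpleGraph.connected_iff _).mpr ⟨hpre, hne⟩)
    obtain ⟨A, B, hA, hB, hAB, hnadj, rfl⟩ := G.exists_separation_of_not_preconnected_induce hnpre
    rw [Set.ncard_coe_finset]
    exact G.lambda2_le_card_compl_union hconn hA hB hAB hnadj
end

section
/- For a connected finite undirected graph G, the second smallest Laplacian eigenvalue satisfies λ₂(L) ≤ 2·i(G), where i(G) is the isoperimetric constant. -/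
open Matrix Finset

theorem Tuple.sort_one_le_max {α : Type*} [LinearOrder α] {n : ℕ} (f : Fin n → α) (hn : 1 < n)
    {i j : Fin n} (hij : i ≠ j) : (f ∘ Tuple.sort f) ⟨1, hn⟩ ≤ max (f i) (f j) := by
  have hle : ∀ k, 1 ≤ ((Tuple.sort f).symm k : ℕ) → (f ∘ Tuple.sort f) ⟨1, hn⟩ ≤ f k :=
    fun k hk => by simpa using Tuple.monotone_sort f (show ⟨1, hn⟩ ≤ (Tuple.sort f).symm k from hk)
  have hne : ((Tuple.sort f).symm i : ℕ) ≠ (Tuple.sort f).symm j :=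
    Fin.val_ne_of_ne ((Tuple.sort f).symm.injective.ne hij)
  rcases Nat.lt_or_ge 0 ((Tuple.sort f).symm i : ℕ) with hi | hi
  · exact (hle i hi).trans (le_max_left _ _)
  · exact (hle j (by omega)).trans (le_max_right _ _)

theorem Matrix.IsHermitian.mul_dotProduct_le_dotProduct_mulVec {n : Type*} [Fintype n]
    [DecidableEq n] {A : Matrix n n ℝ} (hA : A.IsHermitian) {m : ℝ} {x : n → ℝ}
    (hm : ∀ i, hA.eigenvectorBasis i ⬝ᵥ x ≠ 0 → m ≤ hA.eigenvalues i) :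
    m * (x ⬝ᵥ x) ≤ x ⬝ᵥ (A *ᵥ x) := by
  set b := hA.eigenvectorBasis
  set c : n → ℝ := fun i => b i ⬝ᵥ x
  have hparseval : ∀ y, x ⬝ᵥ y = ∑ i, c i * (b i ⬝ᵥ y) := fun y => by
    simpa [c, EuclideanSpace.inner_eq_star_dotProduct, dotProduct_comm] using
      (b.sum_inner_mul_inner (WithLp.toLp 2 x) (WithLp.toLp 2 y)).symm
  have hcomp : ∀ i, b i ⬝ᵥ (A *ᵥ x) = hA.eigenvalues i * c i := fun i => by
    rw [dotProduct_mulVec, ← mulVec_transpose, ← conjTranspose_eq_transpose_of_trivial, hA.eq,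
      hA.mulVec_eigenvectorBasis, smul_dotProduct, smul_eq_mul]
  calc m * (x ⬝ᵥ x) = ∑ i, m * c i ^ 2 := by
        rw [hparseval x, mul_sum]; simp only [c, sq]
    _ ≤ ∑ i, hA.eigenvalues i * c i ^ 2 := by
        refine sum_le_sum fun i _ => ?_
        by_cases hi : c i = 0
        · simp [hi]
        · exact mul_le_mul_of_nonneg_right (hm i hi) (sq_nonneg _)
    _ = x ⬝ᵥ (A *ᵥ x) := by
        rw [hparseval]; simp only [hcomp]; congr 1; ext i; ring

theorem Set.sum_indicator_one {V R : Type*} [Fintype V] [AddCommMonoidWithOne R] (S : Set V) :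
    ∑ i, S.indicator (1 : V → R) i = S.ncard := by
  classical
  simp [Set.indicator_apply, Set.ncard_eq_toFinset_card']

namespace SimpleGraph

variable {V : Type*} [Fintype V] [DecidableEq V] (G : SimpleGraph V) [DecidableRel G.Adj]

theorem lambda2_nonneg : 0 ≤ lambda2 G := by
  unfold lambda2
  split_ifs
  exacts [(posSemidef_lapMatrix ℝ G).eigenvalues_nonneg _, le_rfl]

theorem lambda2_le_max_eigenvalues {v w : V} (hvw : v ≠ w) :
    lambda2 G ≤ max ((posSemidef_lapMatrix ℝ G).1.eigenvalues v)
      ((posSemidef_lapMatrix ℝ G).1.eigenvalues w) := by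
  have hcard : 1 < Fintype.card V := Fintype.one_lt_card_iff.mpr ⟨v, w, hvw⟩
  rw [lambda2, dif_pos hcard]
  simpa using Tuple.sort_one_le_max
    (fun i => (posSemidef_lapMatrix ℝ G).1.eigenvalues ((Fintype.equivFin V).symm i)) hcard
    ((Fintype.equivFin V).injective.ne hvw)

theorem exists_eigenvalues_lapMatrix_eq_zero_s10 [Nonempty V] :
    ∃ v, (posSemidef_lapMatrix ℝ G).1.eigenvalues v = 0 := by
  have hdet : (G.lapMatrix ℝ).det = 0 := exists_mulVec_eq_zero_iff.mp
    ⟨fun _ => 1, Function.ne_iff.mpr ⟨Classical.arbitrary V, one_ne_zero⟩,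
      G.lapMatrix_mulVec_const_eq_zero⟩
  have hprod := (posSemidef_lapMatrix ℝ G).1.det_eq_prod_eigenvalues
  obtain ⟨v, -, hv⟩ := prod_eq_zero_iff.mp (hdet ▸ hprod).symm
  exact ⟨v, mod_cast hv⟩

theorem eigenvectorBasis_lapMatrix_dotProduct_eq_zero (hconn : G.Connected) {v : V}
    (hv : (posSemidef_lapMatrix ℝ G).1.eigenvalues v = 0) {x : V → ℝ} (hx : ∑ i, x i = 0) :
    (posSemidef_lapMatrix ℝ G).1.eigenvectorBasis v ⬝ᵥ x = 0 := by
  set u := ⇑((posSemidef_lapMatrix ℝ G).1.eigenvectorBasis v)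
  have hu : G.lapMatrix ℝ *ᵥ u = 0 := by
    simpa [hv] using (posSemidef_lapMatrix ℝ G).1.mulVec_eigenvectorBasis v
  obtain ⟨i₀⟩ := hconn.nonempty
  have hconst : ∀ i, u i = u i₀ := fun i =>
    (lapMatrix_mulVec_eq_zero_iff_forall_reachable G).mp hu i i₀ (hconn.preconnected i i₀)
  simp [dotProduct, hconst, ← mul_sum, hx]

theorem lambda2_mul_dotProduct_le (hconn : G.Connected) {x : V → ℝ} (hx : ∑ i, x i = 0) :
    lambda2 G * (x ⬝ᵥ x) ≤ x ⬝ᵥ (G.lapMatrix ℝ *ᵥ x) := by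
  have := hconn.nonempty
  obtain ⟨v₀, hv₀⟩ := G.exists_eigenvalues_lapMatrix_eq_zero_s10
  refine (posSemidef_lapMatrix ℝ G).1.mul_dotProduct_le_dotProduct_mulVec fun v hv => ?_
  have hne : v ≠ v₀ := by
    rintro rfl
    exact hv (G.eigenvectorBasis_lapMatrix_dotProduct_eq_zero hconn hv₀ hx)
  calc lambda2 G ≤ max _ _ := G.lambda2_le_max_eigenvalues hne
    _ = _ := by rw [hv₀, max_eq_left ((posSemidef_lapMatrix ℝ G).eigenvalues_nonneg v)]

theorem indicator_dotProduct_lapMatrix_mulVec_indicator (S : Set V) :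
    S.indicator 1 ⬝ᵥ (G.lapMatrix ℝ *ᵥ S.indicator 1) = (edgeBoundaryCount G S : ℝ) := by
  classical
  set B : V → V → ℝ := fun i j => if G.Adj i j ∧ i ∈ S ∧ j ∉ S then 1 else 0
  have hterm : ∀ i j, (if G.Adj i j then (S.indicator (1 : V → ℝ) i - S.indicator 1 j) ^ 2
      else 0) = B i j + B j i := by
    intro i j
    by_cases hi : i ∈ S <;> by_cases hj : j ∈ S <;> simp [B, hi, hj, G.adj_comm]
  have hcount : (edgeBoundaryCount G S : ℝ) = ∑ i, ∑ j, B i j := by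
    rw [edgeBoundaryCount, Set.ncard_eq_toFinset_card', ← sum_product', univ_product_univ,
      sum_boole]
    simp
  rw [← toLinearMap₂'_apply', lapMatrix_toLinearMap₂']
  simp_rw [hterm, sum_add_distrib]
  rw [sum_comm (f := fun i j => B j i), ← hcount]
  ring

theorem dotProduct_lapMatrix_mulVec_smul_add_const (c d : ℝ) (y : V → ℝ) :
    (c • y + fun _ => d) ⬝ᵥ (G.lapMatrix ℝ *ᵥ (c • y + fun _ => d)) =
      c ^ 2 * (y ⬝ᵥ (G.lapMatrix ℝ *ᵥ y)) := by
  simp_rw [← toLinearMap₂'_apply', lapMatrix_toLinearMap₂', mul_div_assoc', mul_sum]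
  congr 1
  refine sum_congr rfl fun i _ => sum_congr rfl fun j _ => ?_
  split_ifs
  · simp only [Pi.add_apply, Pi.smul_apply, smul_eq_mul]
    ring
  · rw [mul_zero]

theorem lambda2_mul_ncard_mul_le (hconn : G.Connected) (S : Set V) :
    lambda2 G * (S.ncard * (Fintype.card V - S.ncard)) ≤
      Fintype.card V * edgeBoundaryCount G S := by
  set n : ℝ := (Fintype.card V : ℝ)
  set s : ℝ := (S.ncard : ℝ)
  set x : V → ℝ := n • S.indicator 1 + fun _ => -s
  have hsum : ∑ i, x i = 0 := by
    simp [x, sum_add_distrib, ← mul_sum, Set.sum_indicator_one, n, s]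
  have hsq : ∀ i, x i * x i = (n ^ 2 - 2 * n * s) * S.indicator 1 i + s ^ 2 := by
    intro i
    by_cases hi : i ∈ S <;> simp [x, hi] <;> ring
  have hnorm : x ⬝ᵥ x = n * (s * (n - s)) := by
    simp only [dotProduct, hsq, sum_add_distrib, ← mul_sum, Set.sum_indicator_one, sum_const,
      card_univ, nsmul_eq_mul]
    ring
  have hquad : x ⬝ᵥ (G.lapMatrix ℝ *ᵥ x) = n ^ 2 * edgeBoundaryCount G S := by
    rw [dotProduct_lapMatrix_mulVec_smul_add_const, indicator_dotProduct_lapMatrix_mulVec_indicator]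
  have hn : 0 < n := by
    have := hconn.nonempty
    exact Nat.cast_pos.mpr Fintype.card_pos
  have := G.lambda2_mul_dotProduct_le hconn hsum
  rw [hnorm, hquad] at this
  nlinarith

theorem lambda2_le_two_mul_edgeBoundaryCount_div (hconn : G.Connected) {S : Set V}
    (hS : S.Nonempty) (hhalf : 2 * S.ncard ≤ Fintype.card V) :
    lambda2 G ≤ 2 * (edgeBoundaryCount G S / S.ncard) := by
  have hs : (0 : ℝ) < S.ncard := Nat.cast_pos.mpr ((Set.ncard_pos S.toFinite).mpr hS)
  have hhalf' : 2 * (S.ncard : ℝ) ≤ Fintype.card V := mod_cast hhalf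
  have hbound := G.lambda2_mul_ncard_mul_le hconn S
  have hnonneg := G.lambda2_nonneg
  rw [mul_div_assoc', le_div_iff₀ hs]
  nlinarith

end SimpleGraph

theorem isoConst_nonneg (V : Type*) [Fintype V] (G : SimpleGraph V) : 0 ≤ isoConst V G :=
  Real.sInf_nonneg fun _ ⟨_, _, _, hx⟩ => hx ▸ by positivity

/-- For a connected finite graph, the second smallest Laplacian eigenvalue is at most
twice the isoperimetric constant. -/
theorem lambda2_le_two_mul_isoConst {V : Type*} [Fintype V] [DecidableEq V]
    (G : SimpleGraph V) [DecidableRel G.Adj] (hconn : G.Connected) :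
    lambda2 G ≤ 2 * isoConst V G := by
  by_cases hcard : 1 < Fintype.card V
  · obtain ⟨v, -⟩ := Fintype.one_lt_card_iff.mp hcard
    suffices lambda2 G / 2 ≤ isoConst V G by linarith
    have hsingleton : 2 * ({v} : Set V).ncard ≤ Fintype.card V := by
      rw [Set.ncard_singleton]; omega
    refine le_csInf ⟨_, {v}, Set.singleton_nonempty v, hsingleton, rfl⟩ ?_
    rintro _ ⟨S, hS, hhalf, rfl⟩
    linarith [G.lambda2_le_two_mul_edgeBoundaryCount_div hconn hS hhalf]
  · rw [lambda2, dif_neg hcard]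
    linarith [isoConst_nonneg V G]
end

section
/- An undirected k-circulant graph on n vertices (with n > 2k) is 2k-vertex-connected. -/
/-- The undirected k-circulant graph on `ZMod n`: x and y are adjacent iff their
difference (in either direction) is between 1 and k mod n. -/
def circulantGraph' (n k : ℕ) : SimpleGraph (ZMod n) :=
  SimpleGraph.fromRel (fun x y => 1 ≤ (y - x).val ∧ (y - x).val ≤ k)

/-!
Delete a set `S` of fewer than `2k` vertices and take two surviving vertices `x ≠ y`. The two
arcs of the cycle between `x` and `y` are disjoint, so one of them contains fewer than `k`
deleted vertices. Along that arc every window of `k` consecutive vertices contains a survivor,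
and consecutive survivors at distance at most `k` are adjacent, so we can walk from `x` to `y`.
-/

open Set

section PathPower

variable {V : Type*} (G : SimpleGraph V) (f : ℕ → V) {k : ℕ}

/-- `hf` says that `G` contains the `k`-th power of the path `f 0, f 1, f 2, …`. -/
lemma reachable_induce_compl_of_ncard_lt (hf : ∀ i j, i < j → j ≤ i + k → G.Adj (f i) (f j))
    (S : Set V) {a b : ℕ} (hab : a ≤ b) (hS : (Ioo a b ∩ f ⁻¹' S).ncard < k)
    (u v : ↥Sᶜ) (hu : (u : V) = f a) (hv : (v : V) = f b) :
    (G.induce Sᶜ).Reachable u v := by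
  induction h : b - a using Nat.strong_induction_on generalizing a u with
  | _ m ih =>
    subst h
    by_cases hnear : b ≤ a + k
    · obtain rfl | hlt := hab.eq_or_lt
      · rw [Subtype.ext (hu.trans hv.symm)]
      · exact (SimpleGraph.induce_adj.mpr (hu ▸ hv ▸ hf a b hlt hnear)).reachable
    · have hwindow : ∃ i ∈ Icc (a + 1) (a + k), f i ∉ S := by
        by_contra! hdead
        have : (Icc (a + 1) (a + k)).ncard ≤ (Ioo a b ∩ f ⁻¹' S).ncard :=
          ncard_le_ncard (fun i hi => ⟨⟨hi.1, by have := hi.2; omega⟩, hdead i hi⟩)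
            ((finite_Ioo a b).inter_of_left _)
        simp only [ncard_eq_toFinset_card', toFinset_Icc, Nat.card_Icc] at this
        omega
      obtain ⟨i, ⟨hai, hia⟩, hi⟩ := hwindow
      have hstep : (G.induce Sᶜ).Adj u ⟨f i, hi⟩ := by
        simpa [hu] using hf a i (by omega) hia
      have hfewer : (Ioo i b ∩ f ⁻¹' S).ncard < k :=
        lt_of_le_of_lt (ncard_le_ncard (inter_subset_inter_left _ (Ioo_subset_Ioo_left (by omega)))
          ((finite_Ioo a b).inter_of_left _)) hS
      exact hstep.reachable.trans (ih (b - i) (by omega) (by omega) hfewer ⟨f i, hi⟩ rfl rfl)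

end PathPower

section Circulant

variable {n k : ℕ}

lemma circulantGraph'_adj_add_natCast (hkn : k < n) (x : ZMod n) (i j : ℕ) (hij : i < j)
    (hjk : j ≤ i + k) : (circulantGraph' n k).Adj (x + i) (x + j) := by
  have hval : (x + j - (x + i)).val = j - i := by
    rw [add_sub_add_left_eq_sub, ← Nat.cast_sub hij.le, ZMod.val_cast_of_lt (by omega)]
  rw [circulantGraph', SimpleGraph.fromRel_adj]
  refine ⟨fun h => ?_, Or.inl ⟨by omega, by omega⟩⟩
  rw [h, sub_self, ZMod.val_zero] at hval
  omega

/-- The two index sets are the open arcs from `x` to `x + d` and from `x + d` back to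
`x + n = x`. -/
lemma ncard_arcs_inter_le [NeZero n] (S : Set (ZMod n)) (x : ZMod n) {d : ℕ} (hd : d ≤ n) :
    (Ioo 0 d ∩ (fun i : ℕ => x + i) ⁻¹' S).ncard + (Ioo d n ∩ (fun i : ℕ => x + i) ⁻¹' S).ncard
      ≤ S.ncard := by
  have hdisj : Disjoint (Ioo 0 d) (Ioo d n) :=
    disjoint_left.mpr fun _ ⟨_, hid⟩ ⟨hdi, _⟩ => (hid.trans hdi).false
  rw [← ncard_union_eq (hdisj.mono inter_subset_left inter_subset_left)
    ((finite_Ioo _ _).inter_of_left _) ((finite_Ioo _ _).inter_of_left _)]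
  refine ncard_le_ncard_of_injOn _ (fun i hi => by rcases hi with ⟨_, hi⟩ | ⟨_, hi⟩ <;> exact hi)
    (fun i hi j hj hij => ?_) S.toFinite
  have hin : i < n := by rcases hi with ⟨⟨_, h⟩, _⟩ | ⟨⟨_, h⟩, _⟩ <;> omega
  have hjn : j < n := by rcases hj with ⟨⟨_, h⟩, _⟩ | ⟨⟨_, h⟩, _⟩ <;> omega
  have := congrArg ZMod.val (add_left_cancel hij)
  rwa [ZMod.val_cast_of_lt hin, ZMod.val_cast_of_lt hjn] at this

lemma circulantGraph'_induce_compl_preconnected [NeZero n] (hkn : k < n) (S : Set (ZMod n))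
    (hS : S.ncard < 2 * k) : ((circulantGraph' n k).induce Sᶜ).Preconnected := by
  rintro u v
  set d := ((v : ZMod n) - u).val
  have hadj := circulantGraph'_adj_add_natCast hkn (u : ZMod n)
  have hu : (u : ZMod n) = u + ((0 : ℕ) : ZMod n) := by simp
  have hv : (v : ZMod n) = u + (d : ZMod n) := by simp [d]
  have hu' : (u : ZMod n) = u + (n : ZMod n) := by simp
  have hdn : d ≤ n := (ZMod.val_lt _).le
  rcases lt_or_ge (Ioo 0 d ∩ (fun i : ℕ => (u : ZMod n) + i) ⁻¹' S).ncard k with hfew | hmany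
  · exact reachable_induce_compl_of_ncard_lt _ _ hadj S (Nat.zero_le d) hfew u v hu hv
  · have hfew : (Ioo d n ∩ (fun i : ℕ => (u : ZMod n) + i) ⁻¹' S).ncard < k := by
      have := ncard_arcs_inter_le S (u : ZMod n) hdn
      omega
    exact (reachable_induce_compl_of_ncard_lt _ _ hadj S hdn hfew v u hv hu').symm

end Circulant

theorem circulant_two_k_connected_general (n k : ℕ) (hn : 2 * k < n) :
    2 * k ≤ vConn (circulantGraph' n k) := by
  have : NeZero n := ⟨by omega⟩
  refine le_csInf ⟨_, univ, rfl, Or.inr (by simp)⟩ ?_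
  rintro _ ⟨S, rfl, hS⟩
  by_contra! hsmall
  have hcompl : S.ncard + Sᶜ.ncard = n := by rw [ncard_add_ncard_compl, Nat.card_zmod]
  have : Nonempty ↥Sᶜ := (nonempty_of_ncard_ne_zero (by omega : Sᶜ.ncard ≠ 0)).to_subtype
  rcases hS with hdisconn | hfew
  · exact hdisconn ⟨circulantGraph'_induce_compl_preconnected (by omega) S hsmall⟩
  · omega

/-- An undirected k-circulant graph on n > 2k vertices is 2k-vertex-connected. -/
theorem circulant_two_k_connected (n k : ℕ) [NeZero n] (hk : 0 < k) (hn : 2 * k < n) :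
    2 * k ≤ vConn (circulantGraph' n k) :=
  circulant_two_k_connected_general n k hn
end

section
/- (Centerpoint Theorem) Every finite set of n points in ℝ^d has a centerpoint, i.e., a point p such that every closed half-space containing p contains at least ⌈n/(d+1)⌉ of the points. -/
open Matrix

/-- Centerpoint theorem: every finite set of n points in ℝ^d has a point p such that
every closed half-space containing p contains at least ⌈n/(d+1)⌉ of the points. -/
theorem centerpoint_theorem (d : ℕ) (X : Finset (Fin d → ℝ)) :
    ∃ p : Fin d → ℝ, ∀ (a : Fin d → ℝ) (b : ℝ), a ≠ 0 → b ≤ a ⬝ᵥ p →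
      ⌈(X.card : ℚ) / ((d : ℚ) + 1)⌉ ≤ (X.filter (fun x => b ≤ a ⬝ᵥ x)).card := by
  classical
  set n := X.card with hn
  -- trivial case: no points
  rcases Nat.eq_zero_or_pos n with hn0 | hnpos
  · refine ⟨0, fun a b _ _ => ?_⟩
    rw [hn0]
    simp
  set k := (n + d) / (d + 1) with hk
  clear_value k
  have hd1 : 0 < d + 1 := Nat.succ_pos d
  have hkmul : (d + 1) * k ≤ n + d := by rw [hk]; exact Nat.mul_div_le (n + d) (d + 1)
  have hlt : n + d < (d + 1) * (k + 1) := by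
    rw [hk]; exact Nat.lt_mul_div_succ _ hd1
  have hnk : n ≤ (d + 1) * k := by
    have h2 : (d + 1) * (k + 1) = (d + 1) * k + (d + 1) := by ring
    omega
  have hk1 : 1 ≤ k := by
    by_contra h
    have : k = 0 := by omega
    rw [this] at hnk; omega
  have hkey : (d + 1) * (k - 1) ≤ n - 1 := by
    obtain ⟨k', hk'⟩ : ∃ k', k = k' + 1 := ⟨k - 1, by omega⟩
    have e1 : (d + 1) * k = (d + 1) * k' + (d + 1) := by rw [hk']; ring
    have e2 : k - 1 = k' := by omega
    rw [e2]
    omega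
  -- the family of big subsets
  set s : Finset (Finset (Fin d → ℝ)) :=
    X.powerset.filter (fun S => n < S.card + k) with hs
  have hmem : ∀ S ∈ s, S ⊆ X ∧ n < S.card + k := by
    intro S hS
    rw [hs, Finset.mem_filter, Finset.mem_powerset] at hS
    exact hS
  -- Helly's theorem
  have hHelly : (⋂ S ∈ s, convexHull ℝ (S : Set (Fin d → ℝ))).Nonempty := by
    apply Convex.helly_theorem' (𝕜 := ℝ)
    · intro S _; exact convex_convexHull ℝ _
    · intro I hI hIcard
      rw [Module.finrank_fin_fun] at hIcard
      set B := X.filter (fun x => ∀ S ∈ I, x ∈ S) with hB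
      have hXsub : X ⊆ B ∪ I.biUnion (fun S => X \ S) := by
        intro x hx
        by_cases hall : ∀ S ∈ I, x ∈ S
        · exact Finset.mem_union_left _ (Finset.mem_filter.2 ⟨hx, hall⟩)
        · push_neg at hall
          obtain ⟨S, hSI, hxS⟩ := hall
          exact Finset.mem_union_right _
            (Finset.mem_biUnion.2 ⟨S, hSI, Finset.mem_sdiff.2 ⟨hx, hxS⟩⟩)
      have hcard2 : ∀ S ∈ I, (X \ S).card ≤ k - 1 := by
        intro S hSI
        obtain ⟨hSX, hScard⟩ := hmem S (hI hSI)
        have := Finset.card_sdiff_of_subset hSX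
        have hSle : S.card ≤ n := by rw [hn]; exact Finset.card_le_card hSX
        omega
      have hbiu : (I.biUnion (fun S => X \ S)).card ≤ (d + 1) * (k - 1) := by
        calc (I.biUnion (fun S => X \ S)).card ≤ ∑ S ∈ I, (X \ S).card :=
              Finset.card_biUnion_le
          _ ≤ ∑ _S ∈ I, (k - 1) := Finset.sum_le_sum hcard2
          _ = I.card * (k - 1) := by rw [Finset.sum_const, smul_eq_mul]
          _ ≤ (d + 1) * (k - 1) := Nat.mul_le_mul_right _ hIcard
      have hBne : B.Nonempty := by
        rw [← Finset.card_pos]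
        have h1 : n ≤ (B ∪ I.biUnion (fun S => X \ S)).card := by
          rw [hn]; exact Finset.card_le_card hXsub
        have h2 := Finset.card_union_le B (I.biUnion (fun S => X \ S))
        omega
      obtain ⟨x, hx⟩ := hBne
      rw [hB, Finset.mem_filter] at hx
      refine ⟨x, Set.mem_biInter fun S hSI => ?_⟩
      exact subset_convexHull ℝ _ (hx.2 S hSI)
  obtain ⟨p, hp⟩ := hHelly
  refine ⟨p, fun a b _ hb => ?_⟩
  set T := X.filter (fun x => b ≤ a ⬝ᵥ x) with hT
  have hTX : T ⊆ X := Finset.filter_subset _ _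
  have hTle : T.card ≤ n := by rw [hn]; exact Finset.card_le_card hTX
  -- it suffices to show k ≤ T.card
  have hceil : ⌈(n : ℚ) / ((d : ℚ) + 1)⌉ ≤ (k : ℤ) := by
    rw [Int.ceil_le]
    rw [div_le_iff₀ (by positivity)]
    push_cast
    rw [mul_comm]
    exact_mod_cast (by exact_mod_cast hnk : (n : ℚ) ≤ ((d + 1) * k : ℕ))
  have hkT : k ≤ T.card := by
    by_contra hcon
    push_neg at hcon
    set S := X \ T with hS'
    have hScard : S.card = n - T.card := by
      rw [hS', Finset.card_sdiff_of_subset hTX, hn]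
    have hSs : S ∈ s := by
      rw [hs, Finset.mem_filter, Finset.mem_powerset]
      refine ⟨Finset.sdiff_subset, ?_⟩
      omega
    have hpS : p ∈ convexHull ℝ (S : Set (Fin d → ℝ)) := by
      exact Set.mem_iInter₂.1 hp S hSs
    have hlin : IsLinearMap ℝ (fun x : Fin d → ℝ => a ⬝ᵥ x) :=
      ⟨fun x y => dotProduct_add a x y, fun c x => by
        simp [dotProduct_smul]⟩
    have hconv : Convex ℝ {x : Fin d → ℝ | a ⬝ᵥ x < b} := convex_halfSpace_lt hlin b
    have hsub : (S : Set (Fin d → ℝ)) ⊆ {x : Fin d → ℝ | a ⬝ᵥ x < b} := by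
      intro x hx
      rw [Finset.mem_coe, hS', Finset.mem_sdiff] at hx
      have : ¬ b ≤ a ⬝ᵥ x := by
        intro hle
        exact hx.2 (Finset.mem_filter.2 ⟨hx.1, hle⟩)
      exact lt_of_not_ge this
    have : p ∈ {x : Fin d → ℝ | a ⬝ᵥ x < b} := convexHull_min hsub hconv hpS
    exact absurd hb (not_le.2 this)
  calc ⌈(n : ℚ) / ((d : ℚ) + 1)⌉ ≤ (k : ℤ) := hceil
    _ ≤ (T.card : ℤ) := by exact_mod_cast hkT
end

section
/- If a graph G on n vertices is r-robust for some r, then r ≤ ⌈n/2⌉; i.e., no graph on n vertices is r-robust for r > ⌈n/2⌉. -/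
/-- No graph on n ≥ 2 vertices is r-robust for r > ⌈n/2⌉. -/
theorem rRobust_le_half_card {V : Type*} [Fintype V] (G : SimpleGraph V) (r : ℕ)
    (hn : 2 ≤ Fintype.card V) (h : rRobust G r) :
    r ≤ (Fintype.card V + 1) / 2 := by
  classical
  set n := Fintype.card V with hncard
  obtain ⟨S, hS, hScard⟩ := Finset.exists_subset_card_eq (s := (Finset.univ : Finset V))
    (by simp only [Finset.card_univ]; omega : n / 2 ≤ Finset.univ.card)
  have hSc : Sᶜ.card = n - n / 2 := by
    rw [Finset.card_compl, hScard]
  have h1 : (↑S : Set V).Nonempty := by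
    rw [Set.nonempty_coe_sort.symm, Finset.coe_sort_coe, Finset.nonempty_coe_sort]
    rw [← Finset.card_pos, hScard]; omega
  have h2 : (↑(Sᶜ) : Set V).Nonempty := by
    rw [Set.nonempty_coe_sort.symm, Finset.coe_sort_coe, Finset.nonempty_coe_sort]
    rw [← Finset.card_pos, hSc]; omega
  have hdisj : Disjoint (↑S : Set V) ↑(Sᶜ) := by
    rw [Finset.coe_compl]
    exact disjoint_compl_right
  have key : ∀ (T : Finset V) (i : V), ({j | G.Adj i j} \ (↑T : Set V)).ncard ≤ Tᶜ.card := by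
    intro T i
    have hsub : {j | G.Adj i j} \ (↑T : Set V) ⊆ (↑(Tᶜ) : Set V) := by
      intro x hx
      simp only [Finset.coe_compl, Set.mem_compl_iff, Finset.mem_coe]
      exact hx.2
    calc ({j | G.Adj i j} \ (↑T : Set V)).ncard ≤ (↑(Tᶜ) : Set V).ncard :=
          Set.ncard_le_ncard hsub (Set.toFinite _)
      _ = Tᶜ.card := by rw [Set.ncard_coe_finset]
  rcases h ↑S ↑(Sᶜ) h1 h2 hdisj with ⟨i, _, hi⟩ | ⟨i, _, hi⟩
  · have := key S i
    have : r ≤ Sᶜ.card := le_trans hi this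
    omega
  · have := key Sᶜ i
    rw [compl_compl] at this
    have : r ≤ S.card := le_trans hi this
    omega
end
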